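/- arXiv:2005.00275 — 3 statements merged into one kernel-verified Lean document; each statement's English description precedes it below -/
import Mathlib

section
/- Let V₁ and V₂ be two disjoint finite families of irreducible hypersurfaces in ℂ^k and let x ∈ ℂ^k ∖ (V₁ ∪ V₂). Then the homomorphism η : π₁(ℂ^k ∖ (V₁ ∪ V₂), x) → π₁(ℂ^k ∖ V₁, x) induced by inclusion is surjective. -/
/-!
A loop in `ℂ^k ∖ V₁` is perturbed, by less than its distance to `V₁`, into a polygonal loop
avoiding `V₂`. This is possible because `V₂` has real codimension two: from a point off `V₂`,
the segments towards the points of a complex line through it hit `V₂` only along finitely many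
real rays, so the endpoints of the segments missing `V₂` are dense. The straight-line homotopy
between the loop and its perturbation stays in `ℂ^k ∖ V₁`, so the perturbed loop, which lies in
`ℂ^k ∖ (V₁ ∪ V₂)`, maps to the class of the original one.
-/

open MvPolynomial Set Metric MeasureTheory

namespace MvPolynomial

variable {σ : Type*}

noncomputable def restrictLine (q : MvPolynomial σ ℂ) (a d : σ → ℂ) : Polynomial ℂ :=
  aeval (fun i => Polynomial.C (a i) + Polynomial.C (d i) * Polynomial.X) q

theorem eval_restrictLine (q : MvPolynomial σ ℂ) (a d : σ → ℂ) (s : ℂ) :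
    (restrictLine q a d).eval s = eval (a + s • d) q := by
  rw [restrictLine, aeval_def, polynomial_eval_eval₂]
  have hC : (Polynomial.evalRingHom s).comp (algebraMap ℂ (Polynomial ℂ)) = RingHom.id ℂ := by
    ext; simp
  have hline : (fun i => (Polynomial.C (a i) + Polynomial.C (d i) * Polynomial.X).eval s) =
      a + s • d := by
    ext i
    simp only [Polynomial.eval_add, Polynomial.eval_mul, Polynomial.eval_C, Polynomial.eval_X,
      Pi.add_apply, Pi.smul_apply, smul_eq_mul, mul_comm]
  rw [hC, hline]
  rfl

theorem isOpen_setOf_forall_eval_ne_zero {R : Type*} [CommSemiring R] [TopologicalSpace R]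
    [IsTopologicalSemiring R] [T1Space R] (S : Finset (MvPolynomial σ R)) :
    IsOpen {y : σ → R | ∀ q ∈ S, eval y q ≠ 0} := by
  simp only [ofPred_forall]
  exact isOpen_biInter_finset fun q _ => (continuous_eval q).isOpen_preimage _ isOpen_ne

end MvPolynomial

theorem Complex.span_real_singleton_ne_top (r : ℂ) : Submodule.span ℝ {r} ≠ ⊤ := by
  intro h
  have := finrank_span_le_card (R := ℝ) ({r} : Set ℂ)
  rw [h, finrank_top, Complex.finrank_real_complex] at this
  simp at this

theorem Polynomial.dense_setOf_forall_eval_real_smul_ne_zero {Q : Polynomial ℂ}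
    (hQ : Q.eval 0 ≠ 0) :
    Dense {s : ℂ | ∀ θ ∈ Icc (0 : ℝ) 1, Q.eval (θ • s) ≠ 0} := by
  have hQ₀ : Q ≠ 0 := by rintro rfl; simp at hQ
  have hnull : volume (⋃ r ∈ Q.roots.toFinset, (Submodule.span ℝ {r} : Set ℂ)) = 0 :=
    (measure_biUnion_null_iff (Finset.countable_toSet _)).2 fun r _ =>
      Measure.addHaar_submodule _ _ (Complex.span_real_singleton_ne_top r)
  -- a bad parameter `s` is a real multiple of a root of `Q`
  refine (interior_eq_empty_iff_dense_compl.1 (Measure.interior_eq_empty_of_null hnull)).mono ?_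
  intro s hs θ hθ hroot
  have hθ₀ : θ ≠ 0 := by rintro rfl; simp [hQ] at hroot
  refine hs (mem_biUnion (Multiset.mem_toFinset.2 ((Polynomial.mem_roots hQ₀).2 hroot)) ?_)
  exact Submodule.mem_span_singleton.2 ⟨θ⁻¹, inv_smul_smul₀ hθ₀ s⟩

section Visibility

variable {E : Type*} [AddCommGroup E] [Module ℝ E]

def visibleSet (W : Set E) (a : E) : Set E := {b | segment ℝ a b ⊆ W}

theorem mem_visibleSet_comm {W : Set E} {a b : E} : b ∈ visibleSet W a ↔ a ∈ visibleSet W b := by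
  simp only [visibleSet, mem_ofPred_eq, segment_symm]

theorem visibleSet_subset {W : Set E} {a : E} : visibleSet W a ⊆ W :=
  fun _ hb => hb (right_mem_segment ℝ _ _)

theorem isOpen_visibleSet [TopologicalSpace E] [IsTopologicalAddGroup E] [ContinuousSMul ℝ E]
    {W : Set E} (hW : IsOpen W) (a : E) : IsOpen (visibleSet W a) := by
  have hW' : visibleSet W a = {b | ∀ t ∈ Icc (0 : ℝ) 1, AffineMap.lineMap a b t ∈ W} := by
    simp only [visibleSet, segment_eq_image_lineMap, image_subset_iff]
    rfl
  have hcont : Continuous fun p : E × ℝ => AffineMap.lineMap a p.1 p.2 := by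
    simp only [AffineMap.lineMap_apply_module]
    fun_prop
  rw [hW', isOpen_iff_mem_nhds]
  exact fun b hb => isCompact_Icc.eventually_forall_of_forall_eventually fun t ht =>
    hcont.continuousAt.eventually (hW.mem_nhds (hb t ht))

end Visibility

namespace MvPolynomial

variable {σ : Type*}

theorem dense_visibleSet_setOf_forall_eval_ne_zero (S : Finset (MvPolynomial σ ℂ)) {a : σ → ℂ}
    (ha : ∀ q ∈ S, eval a q ≠ 0) : Dense (visibleSet {y | ∀ q ∈ S, eval y q ≠ 0} a) := by
  intro c
  set Q := ∏ q ∈ S, restrictLine q a (c - a)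
  have hQ : Q.eval 0 ≠ 0 := by
    simpa [Q, Polynomial.eval_prod, eval_restrictLine, Finset.prod_ne_zero_iff] using ha
  have hmaps : MapsTo (fun s : ℂ => a + s • (c - a))
      {s | ∀ θ ∈ Icc (0 : ℝ) 1, Q.eval (θ • s) ≠ 0} (visibleSet {y | ∀ q ∈ S, eval y q ≠ 0} a) := by
    intro s hs
    rw [visibleSet, mem_ofPred_eq, segment_eq_image']
    rintro _ ⟨θ, hθ, rfl⟩ q hq
    have := hs θ hθ
    rw [Polynomial.eval_prod, Finset.prod_ne_zero_iff] at this
    rw [add_sub_cancel_left]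
    simp only [← smul_assoc]
    simpa [eval_restrictLine] using this q hq
  have hc := mem_closure_image (f := fun s : ℂ => a + s • (c - a)) (by fun_prop)
    (Polynomial.dense_setOf_forall_eval_real_smul_ne_zero hQ 1)
  simpa using closure_mono hmaps.image_subset hc

end MvPolynomial

section Polygon

variable {E : Type*} [AddCommGroup E] [Module ℝ E]

/-- The piecewise-affine interpolation of `w 0, …, w n` at the times `i / n`, written with hat
functions so that continuity is immediate. -/
noncomputable def polygon (w : ℕ → E) (n : ℕ) (t : ℝ) : E :=
  ∑ i ∈ Finset.range (n + 1), max 0 (1 - |n * t - i|) • w i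

theorem continuous_polygon [TopologicalSpace E] [IsTopologicalAddGroup E] [ContinuousSMul ℝ E]
    (w : ℕ → E) (n : ℕ) : Continuous (polygon w n) := by
  unfold polygon
  fun_prop

theorem polygon_eq_lineMap (w : ℕ → E) {n i : ℕ} {t : ℝ} (hi : i < n) (h₁ : (i : ℝ) ≤ n * t)
    (h₂ : n * t ≤ i + 1) : polygon w n t = AffineMap.lineMap (w i) (w (i + 1)) (n * t - i) := by
  rw [polygon, Finset.sum_eq_add i (i + 1) (by omega), AffineMap.lineMap_apply_module]
  · push_cast
    rw [abs_of_nonneg (by linarith), abs_of_nonpos (by linarith), max_eq_right (by linarith),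
      max_eq_right (by linarith)]
    congr 2; ring
  · intro j _ hj
    have : (1 : ℝ) ≤ |n * t - j| := by
      rcases Nat.lt_or_gt_of_ne hj.1 with h | h
      · have : (j : ℝ) + 1 ≤ i := by exact_mod_cast h
        rw [le_abs]; left; linarith
      · have : (i : ℝ) + 2 ≤ j := by exact_mod_cast (by omega : i + 2 ≤ j)
        rw [le_abs]; right; linarith
    simp [max_eq_left (by linarith : 1 - |n * t - j| ≤ 0)]
  · intro h; exact absurd (Finset.mem_range.2 (by omega)) h
  · intro h; exact absurd (Finset.mem_range.2 (by omega)) h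

theorem polygon_zero (w : ℕ → E) {n : ℕ} (hn : 0 < n) : polygon w n 0 = w 0 := by
  rw [polygon_eq_lineMap w hn (by simp) (by simp)]
  simp

theorem polygon_one (w : ℕ → E) {n : ℕ} (hn : 0 < n) : polygon w n 1 = w n := by
  obtain ⟨m, rfl⟩ := Nat.exists_eq_add_of_lt hn
  rw [polygon_eq_lineMap w (i := m) (by omega) (by push_cast; linarith) (by push_cast; linarith)]
  push_cast
  simp [add_sub_cancel_left]

theorem exists_polygon_mem_segment (w : ℕ → E) {n : ℕ} (hn : 1 ≤ n) {t : ℝ} (ht : t ∈ Icc 0 1) :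
    ∃ i < n, |t - i / n| ≤ 1 / n ∧ |t - (i + 1 : ℕ) / n| ≤ 1 / n ∧
      polygon w n t ∈ segment ℝ (w i) (w (i + 1)) := by
  have hn₀ : (0 : ℝ) < n := by exact_mod_cast hn
  obtain ⟨i, hi, h₁, h₂⟩ : ∃ i < n, (i : ℝ) ≤ n * t ∧ n * t ≤ i + 1 := by
    have hnt : n * t ≤ n := by nlinarith [ht.2]
    rcases le_or_gt ⌊n * t⌋₊ (n - 1) with h | h
    · refine ⟨⌊n * t⌋₊, by omega, Nat.floor_le (by nlinarith [ht.1]), (Nat.lt_floor_add_one _).le⟩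
    · have : (n : ℝ) ≤ n * t := by
        have := Nat.floor_le (by nlinarith [ht.1] : 0 ≤ (n : ℝ) * t)
        have : (n : ℝ) ≤ ⌊n * t⌋₊ := by exact_mod_cast (by omega : n ≤ ⌊n * t⌋₊)
        linarith
      refine ⟨n - 1, by omega, ?_, ?_⟩ <;> push_cast [Nat.cast_sub hn] <;> linarith
  have hdist : ∀ j : ℕ, |n * t - j| ≤ 1 → |t - j / n| ≤ 1 / n := fun j hj => by
    rw [show t - j / n = (n * t - j) / n by field_simp, abs_div, abs_of_pos hn₀]
    exact div_le_div_of_nonneg_right hj hn₀.le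
  refine ⟨i, hi, hdist i (abs_le.2 ⟨by linarith, by linarith⟩),
    hdist (i + 1) (abs_le.2 ⟨by push_cast; linarith, by push_cast; linarith⟩), ?_⟩
  rw [polygon_eq_lineMap w hi h₁ h₂]
  exact lineMap_mem_segment ℝ _ _ ⟨by linarith, by linarith⟩

end Polygon

section Approximation

variable {E : Type*} [NormedAddCommGroup E] [NormedSpace ℝ E] {W : Set E}

theorem exists_visible_chain (hW : IsOpen W) (hdense : ∀ a ∈ W, Dense (visibleSet W a))
    {x y : E} (hx : x ∈ W) (hy : y ∈ W) {n : ℕ} (hn : 2 ≤ n) (c : ℕ → E) (hc₀ : c 0 = x)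
    (hcn : c n = y) {δ : ℝ} (hδ : 0 < δ) :
    ∃ w : ℕ → E, w 0 = x ∧ w n = y ∧ (∀ i < n, w (i + 1) ∈ visibleSet W (w i)) ∧
      ∀ i ≤ n, dist (w i) (c i) < δ := by
  -- every vertex is also required to see `y`, so that the chain can be closed at step `n`
  have step : ∀ a ∈ W, ∀ z : E, ∃ b, (b ∈ visibleSet W a ∧ y ∈ visibleSet W b) ∧ dist b z < δ := by
    intro a ha z
    obtain ⟨b, hb, hbz⟩ := ((hdense a ha).inter_of_isOpen_left (hdense y hy)
      (isOpen_visibleSet hW a)).exists_dist_lt z hδ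
    exact ⟨b, ⟨hb.1, mem_visibleSet_comm.1 hb.2⟩, by rwa [dist_comm]⟩
  choose! next hnext using step
  obtain ⟨v, hv₀, hv_succ⟩ : ∃ v : ℕ → E, v 0 = x ∧ ∀ i, v (i + 1) = next (v i) (c (i + 1)) :=
    ⟨fun i => Nat.rec x (fun j vj => next vj (c (j + 1))) i, rfl, fun _ => rfl⟩
  have hv : ∀ i, v i ∈ W := by
    intro i
    induction i with
    | zero => rwa [hv₀]
    | succ j ih => exact hv_succ j ▸ visibleSet_subset (hnext _ ih _).1.1
  refine ⟨fun i => if i = n then y else v i, ?_, if_pos rfl, fun i hi => ?_, fun i hi => ?_⟩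
  · dsimp only
    rw [if_neg (by omega), hv₀]
  · dsimp only
    rcases (by omega : i + 1 < n ∨ i + 1 = n) with h | h
    · rw [if_neg (by omega), if_neg h.ne, hv_succ]
      exact (hnext _ (hv i) _).1.1
    · obtain ⟨j, rfl⟩ : ∃ j, i = j + 1 := ⟨i - 1, by omega⟩
      rw [if_neg (by omega), if_pos h, hv_succ]
      exact (hnext _ (hv j) _).1.2
  · dsimp only
    rcases eq_or_ne i n with rfl | hin
    · rwa [if_pos rfl, hcn, dist_self]
    · rw [if_neg hin]
      rcases i with _ | j
      · rwa [hv₀, hc₀, dist_self]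
      · rw [hv_succ]
        exact (hnext _ (hv j) _).2

theorem Path.exists_forall_mem_dist_lt (hW : IsOpen W) (hdense : ∀ a ∈ W, Dense (visibleSet W a))
    {x y : E} (γ : Path x y) (hx : x ∈ W) (hy : y ∈ W) {ε : ℝ} (hε : 0 < ε) :
    ∃ p : Path x y, ∀ t, p t ∈ W ∧ dist (p t) (γ t) < ε := by
  obtain ⟨δ, hδ, hγδ⟩ := Metric.uniformContinuous_iff.1 γ.uniformContinuous_extend (ε / 2)
    (half_pos hε)
  obtain ⟨m, hm⟩ := exists_nat_one_div_lt hδ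
  set n := m + 2
  have hn : 1 / (n : ℝ) < δ :=
    lt_of_le_of_lt (one_div_le_one_div_of_le (by positivity) (by simp [n])) hm
  obtain ⟨w, hw₀, hwn, hvis, hdist⟩ := exists_visible_chain hW hdense hx hy (by omega : 2 ≤ n)
    (fun i => γ.extend (i / n)) (by simp)
    (by simp only [div_self (by positivity : (n : ℝ) ≠ 0), Path.extend_one]) (half_pos hε)
  refine ⟨⟨⟨polygon w n ∘ (↑), (continuous_polygon w n).comp continuous_subtype_val⟩,
    by simp [polygon_zero w (by omega : 0 < n), hw₀],
    by simp [polygon_one w (by omega : 0 < n), hwn]⟩, fun t => ?_⟩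
  obtain ⟨i, hi, hti, hti', hmem⟩ := exists_polygon_mem_segment w (by omega : 1 ≤ n) t.2
  have hnear : ∀ j ≤ n, |(t : ℝ) - j / n| ≤ 1 / n → dist (w j) (γ t) < ε := fun j hj htj =>
    calc dist (w j) (γ t)
        ≤ dist (w j) (γ.extend (j / n)) + dist (γ.extend (j / n)) (γ.extend t) := by
          rw [γ.extend_extends']; exact dist_triangle _ _ _
      _ < ε / 2 + ε / 2 :=
          add_lt_add (hdist j hj) (hγδ (by rw [Real.dist_eq, abs_sub_comm]; linarith))
      _ = ε := add_halves ε
  have hball : segment ℝ (w i) (w (i + 1)) ⊆ ball (γ t) ε :=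
    (convex_ball _ _).segment_subset (hnear i hi.le hti) (hnear (i + 1) hi hti')
  exact ⟨hvis i hi hmem, hball hmem⟩

end Approximation

def Path.codRestrict {X : Type*} [TopologicalSpace X] {s : Set X} {x y : s} (γ : Path (x : X) y)
    (h : ∀ t, γ t ∈ s) : Path x y where
  toFun t := ⟨γ t, h t⟩
  continuous_toFun := γ.continuous.subtype_mk h
  source' := Subtype.ext γ.source
  target' := Subtype.ext γ.target

theorem Path.homotopic_of_segment_subset {E : Type*} [AddCommGroup E] [TopologicalSpace E]
    [IsTopologicalAddGroup E] [Module ℝ E] [ContinuousSMul ℝ E] {U : Set E} {x y : U}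
    {γ₀ γ₁ : Path x y} (h : ∀ t, segment ℝ (γ₀ t : E) (γ₁ t) ⊆ U) : γ₀.Homotopic γ₁ :=
  ⟨{ toFun := fun st => ⟨AffineMap.lineMap (γ₀ st.2 : E) (γ₁ st.2) (st.1 : ℝ),
        h st.2 (lineMap_mem_segment ℝ _ _ st.1.2)⟩
     continuous_toFun := by
       refine Continuous.subtype_mk ?_ _
       simp only [AffineMap.lineMap_apply_module]
       fun_prop
     map_zero_left := fun t => by simp
     map_one_left := fun t => by simp
     prop' := fun s t ht => by
       rcases ht with rfl | rfl <;> simp }⟩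

attribute [local instance] Path.Homotopic.setoid

theorem bessis_surjectivity_general (k : ℕ) (S₁ S₂ : Finset (MvPolynomial (Fin k) ℂ))
    (x : Fin k → ℂ) (hx : x ∈ {y : Fin k → ℂ |
      (∀ p ∈ S₁, eval y p ≠ 0) ∧ ∀ q ∈ S₂, eval y q ≠ 0}) :
    -- the complement of V₁ ∪ V₂ is included in the complement of V₁ :
    ∀ hsub : {y : Fin k → ℂ | (∀ p ∈ S₁, eval y p ≠ 0) ∧ ∀ q ∈ S₂, eval y q ≠ 0} ⊆
        {y : Fin k → ℂ | ∀ p ∈ S₁, eval y p ≠ 0},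
    -- η, the map induced by this inclusion on homotopy classes of loops at x,
    -- is surjective :
    Function.Surjective
      (fun γ : Path.Homotopic.Quotient
          (⟨x, hx⟩ : {y : Fin k → ℂ | (∀ p ∈ S₁, eval y p ≠ 0) ∧ ∀ q ∈ S₂, eval y q ≠ 0})
          ⟨x, hx⟩ =>
        Path.Homotopic.Quotient.map γ ⟨Set.inclusion hsub, continuous_inclusion hsub⟩) := by
  intro hsub Γ
  induction Γ using Quotient.inductionOn with | h γ => ?_
  let γE : Path x x := γ.map continuous_subtype_val
  obtain ⟨ε, hε, hthick⟩ := (isCompact_range γE.continuous).exists_thickening_subset_open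
    (isOpen_setOf_forall_eval_ne_zero S₁) (range_subset_iff.2 fun t => (γ t).2)
  obtain ⟨p, hp⟩ := γE.exists_forall_mem_dist_lt (isOpen_setOf_forall_eval_ne_zero S₂)
    (fun a ha => dense_visibleSet_setOf_forall_eval_ne_zero S₂ ha) hx.2 hx.2 hε
  have hball : ∀ t, ball (γE t) ε ⊆ {y | ∀ p ∈ S₁, eval y p ≠ 0} := fun t =>
    (ball_subset_thickening (mem_range_self t) ε).trans hthick
  refine ⟨⟦p.codRestrict (x := ⟨x, hx⟩) (y := ⟨x, hx⟩) fun t => ⟨hball t (hp t).2, (hp t).1⟩⟧,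
    Quotient.sound ?_⟩
  exact Path.homotopic_of_segment_subset fun t =>
    ((convex_ball _ _).segment_subset (hp t).2 (mem_ball_self hε)).trans (hball t)

theorem bessis_surjectivity (k : ℕ) (S₁ S₂ : Finset (MvPolynomial (Fin k) ℂ))
    (hirr₁ : ∀ p ∈ S₁, Irreducible p) (hirr₂ : ∀ q ∈ S₂, Irreducible q)
    (hdisj : ∀ p ∈ S₁, ∀ q ∈ S₂,
      {y : Fin k → ℂ | eval y p = 0} ≠ {y : Fin k → ℂ | eval y q = 0})
    (x : Fin k → ℂ) (hx : x ∈ {y : Fin k → ℂ |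
      (∀ p ∈ S₁, eval y p ≠ 0) ∧ ∀ q ∈ S₂, eval y q ≠ 0}) :
    -- the complement of V₁ ∪ V₂ is included in the complement of V₁ :
    ∀ hsub : {y : Fin k → ℂ | (∀ p ∈ S₁, eval y p ≠ 0) ∧ ∀ q ∈ S₂, eval y q ≠ 0} ⊆
        {y : Fin k → ℂ | ∀ p ∈ S₁, eval y p ≠ 0},
    -- η, the map induced by this inclusion on homotopy classes of loops at x,
    -- is surjective :
    Function.Surjective
      (fun γ : Path.Homotopic.Quotient
          (⟨x, hx⟩ : {y : Fin k → ℂ | (∀ p ∈ S₁, eval y p ≠ 0) ∧ ∀ q ∈ S₂, eval y q ≠ 0})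
          ⟨x, hx⟩ =>
        Path.Homotopic.Quotient.map γ ⟨Set.inclusion hsub, continuous_inclusion hsub⟩) :=
  bessis_surjectivity_general k S₁ S₂ x hx
end

section
/- Let A be a finite subset of ℤ^{1+n}, Γ a face of N = conv(A), and α_k ∈ A a lattice redundant point (i.e., ℤ_{A∩F} = ℤ_{A_k∩F} for every face F of N, where A_k = A∖{α_k}). If α_k ∈ ℤ_{A∩Γ}, then ℤ_{A∩Γ} + ℕ_A = ℤ_{A_k∩Γ} + ℕ_{A_k}, where ℕ_A is the monoid generated by A and 0, and ℤ_S denotes the group generated by S. -/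
/-- The coercion ℤ^{1+n} → ℝ^{1+n}. -/
def toRv {n : ℕ} (v : Fin (n + 1) → ℤ) : Fin (n + 1) → ℝ := fun i => (v i : ℝ)

theorem AddSubmonoid.sup_closure_diff_singleton_of_mem {M : Type*} [AddMonoid M]
    (N : AddSubmonoid M) (s : Set M) {x : M} (hx : x ∈ N) :
    N ⊔ closure s = N ⊔ closure (s \ {x}) := by
  refine le_antisymm (sup_le le_sup_left ?_) (sup_le_sup_left (closure_mono Set.sdiff_subset) N)
  calc closure s ≤ closure ({x} ∪ s \ {x}) := closure_mono (by simp)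
    _ = closure {x} ⊔ closure (s \ {x}) := closure_union _ _
    _ ≤ N ⊔ closure (s \ {x}) := sup_le_sup_right (by simpa using hx) _

theorem lattice_plus_monoid_eq_of_latticeRedundant_general (n : ℕ)
    (A : Finset (Fin (n + 1) → ℤ)) (αk : Fin (n + 1) → ℤ)
    (Γ : Set (Fin (n + 1) → ℝ))
    -- Γ is a face of N = conv(A) :
    (hΓ : IsExtreme ℝ (convexHull ℝ (toRv '' (A : Set (Fin (n + 1) → ℤ)))) Γ)
    -- α_k is lattice redundant: for every face F of conv(A), ℤ_{A∩F} = ℤ_{A_k∩F} :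
    (hred : ∀ F : Set (Fin (n + 1) → ℝ),
      IsExtreme ℝ (convexHull ℝ (toRv '' (A : Set (Fin (n + 1) → ℤ)))) F →
      AddSubgroup.closure {a : Fin (n + 1) → ℤ | a ∈ A ∧ toRv a ∈ F} =
        AddSubgroup.closure {a : Fin (n + 1) → ℤ | a ∈ A.erase αk ∧ toRv a ∈ F})
    -- α_k ∈ ℤ_{A∩Γ} :
    (hmem : αk ∈ AddSubgroup.closure {a : Fin (n + 1) → ℤ | a ∈ A ∧ toRv a ∈ Γ}) :
    -- ℤ_{A∩Γ} + ℕ_A = ℤ_{A_k∩Γ} + ℕ_{A_k}  (as submonoids of ℤ^{1+n}) :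
    (AddSubgroup.closure
        {a : Fin (n + 1) → ℤ | a ∈ A ∧ toRv a ∈ Γ}).toAddSubmonoid ⊔
      AddSubmonoid.closure (A : Set (Fin (n + 1) → ℤ)) =
    (AddSubgroup.closure
        {a : Fin (n + 1) → ℤ | a ∈ A.erase αk ∧ toRv a ∈ Γ}).toAddSubmonoid ⊔
      AddSubmonoid.closure ((A.erase αk : Finset (Fin (n + 1) → ℤ)) :
        Set (Fin (n + 1) → ℤ)) := by
  rw [hred Γ hΓ] at hmem ⊢
  rw [Finset.coe_erase]
  exact AddSubmonoid.sup_closure_diff_singleton_of_mem _ _ hmem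

theorem lattice_plus_monoid_eq_of_latticeRedundant (n : ℕ)
    (A : Finset (Fin (n + 1) → ℤ)) (αk : Fin (n + 1) → ℤ) (hαk : αk ∈ A)
    (Γ : Set (Fin (n + 1) → ℝ))
    -- Γ is a face of N = conv(A) :
    (hΓ : IsExtreme ℝ (convexHull ℝ (toRv '' (A : Set (Fin (n + 1) → ℤ)))) Γ)
    -- α_k is lattice redundant: for every face F of conv(A), ℤ_{A∩F} = ℤ_{A_k∩F} :
    (hred : ∀ F : Set (Fin (n + 1) → ℝ),
      IsExtreme ℝ (convexHull ℝ (toRv '' (A : Set (Fin (n + 1) → ℤ)))) F →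
      AddSubgroup.closure {a : Fin (n + 1) → ℤ | a ∈ A ∧ toRv a ∈ F} =
        AddSubgroup.closure {a : Fin (n + 1) → ℤ | a ∈ A.erase αk ∧ toRv a ∈ F})
    -- α_k ∈ ℤ_{A∩Γ} :
    (hmem : αk ∈ AddSubgroup.closure {a : Fin (n + 1) → ℤ | a ∈ A ∧ toRv a ∈ Γ}) :
    -- ℤ_{A∩Γ} + ℕ_A = ℤ_{A_k∩Γ} + ℕ_{A_k}  (as submonoids of ℤ^{1+n}) :
    (AddSubgroup.closure
        {a : Fin (n + 1) → ℤ | a ∈ A ∧ toRv a ∈ Γ}).toAddSubmonoid ⊔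
      AddSubmonoid.closure (A : Set (Fin (n + 1) → ℤ)) =
    (AddSubgroup.closure
        {a : Fin (n + 1) → ℤ | a ∈ A.erase αk ∧ toRv a ∈ Γ}).toAddSubmonoid ⊔
      AddSubmonoid.closure ((A.erase αk : Finset (Fin (n + 1) → ℤ)) :
        Set (Fin (n + 1) → ℤ)) :=
  lattice_plus_monoid_eq_of_latticeRedundant_general n A αk Γ hΓ hred hmem
end

section
/- Let A be a finite subset of ℤ^{1+n}, α_k ∈ A lattice redundant, and Γ a face of N = conv(A) with α_k ∈ ℤ_{A∩Γ}. Then the quotient semigroups ℕ_A/Γ and ℕ_{A_k}/Γ coincide, where ℕ_A/Γ = (ℤ_{A∩Γ} + ℕ_A)/(ℤ_A ∩ Γ_ℝ) and Γ_ℝ is the linear span of Γ and the origin. -/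
/-- The coercion ℤ^{1+n} → ℝ^{1+n} as an additive monoid homomorphism. -/
def toRhom (n : ℕ) : (Fin (n + 1) → ℤ) →+ (Fin (n + 1) → ℝ) where
  toFun v := fun i => (v i : ℝ)
  map_zero' := by funext i; simp
  map_add' u v := by funext i; simp

namespace AddSubmonoid

theorem sup_closure_diff_singleton {M : Type*} [AddMonoid M] {N : AddSubmonoid M} {a : M}
    (ha : a ∈ N) (s : Set M) : N ⊔ closure (s \ {a}) = N ⊔ closure s := by
  have hN : N ⊔ closure {a} = N := sup_eq_left.2 ((closure_singleton_le_iff_mem a N).2 ha)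
  calc N ⊔ closure (s \ {a}) = N ⊔ closure ({a} ∪ s \ {a}) := by
        rw [closure_union, ← sup_assoc, hN]
    _ = N ⊔ closure s := by rw [Set.union_sdiff_self, closure_union, ← sup_assoc, hN]

end AddSubmonoid

theorem quotient_semigroups_eq_of_latticeRedundant_general (n : ℕ)
    (A : Finset (Fin (n + 1) → ℤ)) (αk : Fin (n + 1) → ℤ)
    (Γ : Set (Fin (n + 1) → ℝ))
    -- Γ is a face of N = conv(A) :
    (hΓ : IsExtreme ℝ (convexHull ℝ (toRhom n '' (A : Set (Fin (n + 1) → ℤ)))) Γ)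
    -- α_k is lattice redundant: for every face F of conv(A), ℤ_{A∩F} = ℤ_{A_k∩F} :
    (hred : ∀ F : Set (Fin (n + 1) → ℝ),
      IsExtreme ℝ (convexHull ℝ (toRhom n '' (A : Set (Fin (n + 1) → ℤ)))) F →
      AddSubgroup.closure {a : Fin (n + 1) → ℤ | a ∈ A ∧ toRhom n a ∈ F} =
        AddSubgroup.closure {a : Fin (n + 1) → ℤ | a ∈ A.erase αk ∧ toRhom n a ∈ F})
    -- α_k ∈ ℤ_{A∩Γ} :
    (hmem : αk ∈ AddSubgroup.closure {a : Fin (n + 1) → ℤ | a ∈ A ∧ toRhom n a ∈ Γ})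
    (K : AddSubgroup (Fin (n + 1) → ℤ)) :
    -- ℕ_A/Γ = ℕ_{A_k}/Γ, as submonoids of the quotient :
    AddSubmonoid.map (QuotientAddGroup.mk' K)
      ((AddSubgroup.closure
          {a : Fin (n + 1) → ℤ | a ∈ A ∧ toRhom n a ∈ Γ}).toAddSubmonoid ⊔
        AddSubmonoid.closure (A : Set (Fin (n + 1) → ℤ))) =
    AddSubmonoid.map (QuotientAddGroup.mk' K)
      ((AddSubgroup.closure
          {a : Fin (n + 1) → ℤ | a ∈ A.erase αk ∧ toRhom n a ∈ Γ}).toAddSubmonoid ⊔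
        AddSubmonoid.closure ((A.erase αk : Finset (Fin (n + 1) → ℤ)) :
          Set (Fin (n + 1) → ℤ))) := by
  rw [← hred Γ hΓ, Finset.coe_erase, AddSubmonoid.sup_closure_diff_singleton hmem]

theorem quotient_semigroups_eq_of_latticeRedundant (n : ℕ)
    (A : Finset (Fin (n + 1) → ℤ)) (αk : Fin (n + 1) → ℤ) (hαk : αk ∈ A)
    (Γ : Set (Fin (n + 1) → ℝ))
    -- Γ is a face of N = conv(A) :
    (hΓ : IsExtreme ℝ (convexHull ℝ (toRhom n '' (A : Set (Fin (n + 1) → ℤ)))) Γ)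
    -- α_k is lattice redundant: for every face F of conv(A), ℤ_{A∩F} = ℤ_{A_k∩F} :
    (hred : ∀ F : Set (Fin (n + 1) → ℝ),
      IsExtreme ℝ (convexHull ℝ (toRhom n '' (A : Set (Fin (n + 1) → ℤ)))) F →
      AddSubgroup.closure {a : Fin (n + 1) → ℤ | a ∈ A ∧ toRhom n a ∈ F} =
        AddSubgroup.closure {a : Fin (n + 1) → ℤ | a ∈ A.erase αk ∧ toRhom n a ∈ F})
    -- α_k ∈ ℤ_{A∩Γ} :
    (hmem : αk ∈ AddSubgroup.closure {a : Fin (n + 1) → ℤ | a ∈ A ∧ toRhom n a ∈ Γ})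
    -- K = ℤ_A ∩ Γ_ℝ, the subgroup of ℤ_A of points lying in the linear span of Γ :
    (K : AddSubgroup (Fin (n + 1) → ℤ))
    (hK : K = AddSubgroup.closure (A : Set (Fin (n + 1) → ℤ)) ⊓
        (Submodule.span ℝ Γ).toAddSubgroup.comap (toRhom n)) :
    -- ℕ_A/Γ = ℕ_{A_k}/Γ, as submonoids of the quotient :
    AddSubmonoid.map (QuotientAddGroup.mk' K)
      ((AddSubgroup.closure
          {a : Fin (n + 1) → ℤ | a ∈ A ∧ toRhom n a ∈ Γ}).toAddSubmonoid ⊔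
        AddSubmonoid.closure (A : Set (Fin (n + 1) → ℤ))) =
    AddSubmonoid.map (QuotientAddGroup.mk' K)
      ((AddSubgroup.closure
          {a : Fin (n + 1) → ℤ | a ∈ A.erase αk ∧ toRhom n a ∈ Γ}).toAddSubmonoid ⊔
        AddSubmonoid.closure ((A.erase αk : Finset (Fin (n + 1) → ℤ)) :
          Set (Fin (n + 1) → ℤ))) :=
  quotient_semigroups_eq_of_latticeRedundant_general n A αk Γ hΓ hred hmem K
end
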